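/- The double-shifted matrix M̄ (with shift parameters η > 0 and ξ < 0) is a Z-matrix if and only if 0 < η < 1/ω_1 and (-1 + ηω_1)/ω_1 ≤ ξ < 0. -/

import Mathlib

open Matrix

/-!
With `Γ⁻¹ = Δ⁻¹ = diag ω`, every off-diagonal entry of `M̄` is a positive multiple of
`-(1 - η ω_i ± ξ ω_j)` or of `-(1 + η ω_i ± ξ ω_j)`. Since `η > 0 > ξ`, all of them are controlled
by the entries `-q_i q_j (1 - η ω_i + ξ ω_j)` of `-C̄`, and since `ω` is decreasing the worst of
these is at `i = j = 1`. So `M̄` is a Z-matrix iff `1 - η ω_1 + ξ ω_1 ≥ 0`, which is the stated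
condition on `ξ` and forces `η ω_1 < 1`.
-/

def IsZMatrix {ι R : Type*} [Zero R] [LE R] (M : Matrix ι ι R) : Prop :=
  ∀ i j, i ≠ j → M i j ≤ 0

section DoubleShift

variable {ι R : Type*} [Fintype ι] [DecidableEq ι]

theorem inv_diagonal_one_div [Field R] {ω : ι → R} (hω : ∀ i, ω i ≠ 0) :
    (diagonal fun i => 1 / ω i)⁻¹ = diagonal ω := by
  refine inv_eq_left_inv ?_
  rw [diagonal_mul_diagonal, ← diagonal_one]
  congr 1
  funext i
  field_simp [hω i]

/-- The double-shifted matrix `M̄`, written with `Γ = Δ = diag (1 / ω)` and `e = 1`. -/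
def doubleShift [Field R] (ω q : ι → R) (η ξ : R) : Matrix (ι ⊕ ι) (ι ⊕ ι) R :=
  fromBlocks
    (diagonal (fun i => 1 / ω i) + (η • diagonal ω - 1) * vecMulVec q (fun _ => 1)
      + ξ • (vecMulVec q (fun _ => 1) * diagonal ω))
    (-((1 - η • diagonal ω) * vecMulVec q q + ξ • (vecMulVec q q * diagonal ω)))
    (-((1 + η • diagonal ω) * vecMulVec (fun _ => 1) (fun _ => 1)
      - ξ • (vecMulVec (fun _ => 1) (fun _ => 1) * diagonal ω)))
    (diagonal (fun i => 1 / ω i) - (1 + η • diagonal ω) * vecMulVec (fun _ => 1) q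
      - ξ • (vecMulVec (fun _ => 1) q * diagonal ω))

variable [Field R] (ω q : ι → R) (η ξ : R) {i j : ι}

theorem doubleShift_inl_inl (hij : i ≠ j) :
    doubleShift ω q η ξ (.inl i) (.inl j) = -(q i * (1 - η * ω i - ξ * ω j)) := by
  simp [doubleShift, sub_mul, mul_diagonal, diagonal_mul, vecMulVec_apply,
    diagonal_apply_ne _ hij]
  ring

theorem doubleShift_inl_inr :
    doubleShift ω q η ξ (.inl i) (.inr j) = -(q i * q j * (1 - η * ω i + ξ * ω j)) := by
  simp [doubleShift, sub_mul, mul_diagonal, diagonal_mul, vecMulVec_apply]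
  ring

theorem doubleShift_inr_inl :
    doubleShift ω q η ξ (.inr i) (.inl j) = -(1 + η * ω i - ξ * ω j) := by
  simp [doubleShift, add_mul, mul_diagonal, diagonal_mul, vecMulVec_apply]

theorem doubleShift_inr_inr (hij : i ≠ j) :
    doubleShift ω q η ξ (.inr i) (.inr j) = -(q j * (1 + η * ω i + ξ * ω j)) := by
  simp [doubleShift, add_mul, mul_diagonal, diagonal_mul, vecMulVec_apply,
    diagonal_apply_ne _ hij]
  ring

end DoubleShift

section Order

variable {ι R : Type*} [Field R] [LinearOrder R] [IsStrictOrderedRing R]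

theorem isZMatrix_doubleShift_iff [Fintype ι] [DecidableEq ι] {ω q : ι → R} {η ξ : R}
    (hω : ∀ i, 0 < ω i) (hq : ∀ i, 0 < q i) (hη : 0 < η) (hξ : ξ < 0) :
    IsZMatrix (doubleShift ω q η ξ) ↔ ∀ i j, 0 ≤ 1 - η * ω i + ξ * ω j := by
  constructor
  · intro hZ i j
    have hC := hZ (.inl i) (.inr j) Sum.inl_ne_inr
    rw [doubleShift_inl_inr, neg_nonpos] at hC
    exact (mul_nonneg_iff_of_pos_left (mul_pos (hq i) (hq j))).1 hC
  · intro h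
    have hηω := fun i => mul_pos hη (hω i)
    have hξω := fun i => mul_neg_of_neg_of_pos hξ (hω i)
    rintro (i | i) (j | j) hij
    · rw [doubleShift_inl_inl _ _ _ _ (Sum.inl_injective.ne_iff.1 hij), neg_nonpos]
      exact mul_nonneg (hq i).le (by linarith [h i i, hξω i, hξω j])
    · rw [doubleShift_inl_inr, neg_nonpos]
      exact mul_nonneg (mul_pos (hq i) (hq j)).le (h i j)
    · rw [doubleShift_inr_inl, neg_nonpos]
      linarith [hηω i, hξω j]
    · rw [doubleShift_inr_inr _ _ _ _ (Sum.inr_injective.ne_iff.1 hij), neg_nonpos]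
      exact mul_nonneg (hq j).le (by linarith [h j j, hηω i, hηω j])

theorem forall_one_sub_mul_add_mul_nonneg_iff {ω : ι → R} {η ξ : R} {i₀ : ι}
    (hmax : ∀ i, ω i ≤ ω i₀) (hη : 0 ≤ η) (hξ : ξ ≤ 0) :
    (∀ i j, 0 ≤ 1 - η * ω i + ξ * ω j) ↔ 0 ≤ 1 - η * ω i₀ + ξ * ω i₀ :=
  ⟨fun h => h i₀ i₀, fun h i j => by
    nlinarith [mul_le_mul_of_nonneg_left (hmax i) hη, mul_le_mul_of_nonpos_left (hmax j) hξ]⟩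

end Order

theorem double_shift_Zmatrix_iff_general {n : ℕ} (hn : 0 < n) (ω c : Fin n → ℝ)
    (hω : ∀ i, 0 < ω i) (hmono : StrictAnti ω)
    (hc : ∀ i, 0 < c i)
    (q e : Fin n → ℝ) (hq : q = fun i => c i / (2 * ω i)) (he : e = fun _ => 1)
    (Γ Δ : Matrix (Fin n) (Fin n) ℝ)
    (hΓ : Γ = diagonal fun i => 1 / ω i) (hΔ : Δ = diagonal fun i => 1 / ω i)
    (η ξ : ℝ) (hη : 0 < η) (hξ : ξ < 0)
    (Db Cb Bb Ab : Matrix (Fin n) (Fin n) ℝ)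
    (hDb : Db = Γ + (η • Γ⁻¹ - 1) * vecMulVec q e + ξ • (vecMulVec q e * Γ⁻¹))
    (hCb : Cb = (1 - η • Γ⁻¹) * vecMulVec q q + ξ • (vecMulVec q q * Δ⁻¹))
    (hBb : Bb = (1 + η • Δ⁻¹) * vecMulVec e e - ξ • (vecMulVec e e * Γ⁻¹))
    (hAb : Ab = Δ - (1 + η • Δ⁻¹) * vecMulVec e q - ξ • (vecMulVec e q * Δ⁻¹))
    (Mb : Matrix (Fin n ⊕ Fin n) (Fin n ⊕ Fin n) ℝ)
    (hMb : Mb = fromBlocks Db (-Cb) (-Bb) Ab) :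
    (∀ i j, i ≠ j → Mb i j ≤ 0) ↔
      (0 < η ∧ η < 1 / ω ⟨0, hn⟩ ∧
        (-1 + η * ω ⟨0, hn⟩) / ω ⟨0, hn⟩ ≤ ξ ∧ ξ < 0) := by
  set i₀ : Fin n := ⟨0, hn⟩
  have hMb' : Mb = doubleShift ω q η ξ := by
    subst_vars
    rw [inv_diagonal_one_div fun i => (hω i).ne']
    rfl
  have hq_pos : ∀ i, 0 < q i := fun i => hq ▸ div_pos (hc i) (by linarith [hω i])
  have hmax : ∀ i, ω i ≤ ω i₀ := fun i => hmono.antitone (Nat.zero_le i.val)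
  change IsZMatrix Mb ↔ _
  rw [hMb', isZMatrix_doubleShift_iff hω hq_pos hη hξ,
    forall_one_sub_mul_add_mul_nonneg_iff hmax hη.le hξ.le,
    lt_div_iff₀ (hω i₀), div_le_iff₀ (hω i₀)]
  have hξω := mul_neg_of_neg_of_pos hξ (hω i₀)
  constructor
  · intro h
    exact ⟨hη, by linarith, by linarith, hξ⟩
  · rintro ⟨-, -, h, -⟩
    linarith

/-- Theorem 3.4: the double-shifted matrix `M̄` is a Z-matrix if and only if
`0 < η < 1/ω₁` and `(-1 + η ω₁)/ω₁ ≤ ξ < 0`. -/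
theorem double_shift_Zmatrix_iff {n : ℕ} (hn : 0 < n) (ω c : Fin n → ℝ)
    (hω : ∀ i, 0 < ω i) (hω1 : ∀ i, ω i < 1) (hmono : StrictAnti ω)
    (hc : ∀ i, 0 < c i) (hsum : ∑ i, c i = 1)
    (q e : Fin n → ℝ) (hq : q = fun i => c i / (2 * ω i)) (he : e = fun _ => 1)
    (Γ Δ : Matrix (Fin n) (Fin n) ℝ)
    (hΓ : Γ = diagonal fun i => 1 / ω i) (hΔ : Δ = diagonal fun i => 1 / ω i)
    (η ξ : ℝ) (hη : 0 < η) (hξ : ξ < 0)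
    (Db Cb Bb Ab : Matrix (Fin n) (Fin n) ℝ)
    (hDb : Db = Γ + (η • Γ⁻¹ - 1) * vecMulVec q e + ξ • (vecMulVec q e * Γ⁻¹))
    (hCb : Cb = (1 - η • Γ⁻¹) * vecMulVec q q + ξ • (vecMulVec q q * Δ⁻¹))
    (hBb : Bb = (1 + η • Δ⁻¹) * vecMulVec e e - ξ • (vecMulVec e e * Γ⁻¹))
    (hAb : Ab = Δ - (1 + η • Δ⁻¹) * vecMulVec e q - ξ • (vecMulVec e q * Δ⁻¹))
    (Mb : Matrix (Fin n ⊕ Fin n) (Fin n ⊕ Fin n) ℝ)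
    (hMb : Mb = fromBlocks Db (-Cb) (-Bb) Ab) :
    (∀ i j, i ≠ j → Mb i j ≤ 0) ↔
      (0 < η ∧ η < 1 / ω ⟨0, hn⟩ ∧
        (-1 + η * ω ⟨0, hn⟩) / ω ⟨0, hn⟩ ≤ ξ ∧ ξ < 0) :=
  double_shift_Zmatrix_iff_general hn ω c hω hmono hc q e hq he Γ Δ hΓ hΔ η ξ hη hξ Db Cb Bb Ab hDb
    hCb hBb hAb Mb hMb
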